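/- arXiv:1708.01656 — 3 statements merged into one kernel-verified Lean document; each statement's English description precedes it below -/
import Mathlib

section
/- If G is a claw-free graph (no induced K_{1,3}), then the domination number of G equals the independent domination number of G, i.e., γ(G) = i(G). -/
open SimpleGraph Finset
open scoped Classical

/-- The closed neighborhood of `v` as a finset. -/
noncomputable def closedNbr {V : Type*} [Fintype V] (G : SimpleGraph V) (v : V) : Finset V :=
  Finset.univ.filter (fun u => u = v ∨ G.Adj u v)

/-- `S` is a dominating set of `G`. -/
def IsDomSet {V : Type*} (G : SimpleGraph V) (S : Finset V) : Prop :=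
  ∀ v, v ∉ S → ∃ u ∈ S, G.Adj u v

/-- The domination number γ(G). -/
noncomputable def domNum (V : Type*) [Fintype V] (G : SimpleGraph V) : ℕ :=
  sInf {n | ∃ S : Finset V, IsDomSet G S ∧ S.card = n}

/-- `S` is an independent dominating set of `G`. -/
def IsIndepDomSet {V : Type*} (G : SimpleGraph V) (S : Finset V) : Prop :=
  IsDomSet G S ∧ ∀ u ∈ S, ∀ v ∈ S, ¬ G.Adj u v

/-- The independent domination number i(G). -/
noncomputable def indepDomNum (V : Type*) [Fintype V] (G : SimpleGraph V) : ℕ :=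
  sInf {n | ∃ S : Finset V, IsIndepDomSet G S ∧ S.card = n}

/-- `S` is a 2-dominating set of `G`. -/
noncomputable def IsTwoDomSet {V : Type*} [Fintype V] (G : SimpleGraph V) (S : Finset V) : Prop :=
  ∀ v, v ∉ S → 2 ≤ (S.filter (fun u => G.Adj u v)).card

/-- The 2-domination number γ₂(G). -/
noncomputable def twoDomNum (V : Type*) [Fintype V] (G : SimpleGraph V) : ℕ :=
  sInf {n | ∃ S : Finset V, IsTwoDomSet G S ∧ S.card = n}

/-- `f` is a {k}-dominating function on `G`. -/
noncomputable def IsKDomFun {V : Type*} [Fintype V] (G : SimpleGraph V) (k : ℕ) (f : V → ℕ) : Prop :=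
  (∀ v, f v ≤ k) ∧ ∀ v, k ≤ ∑ u ∈ closedNbr G v, f u

/-- The {k}-domination number γ_{k}(G). -/
noncomputable def kDomNum (V : Type*) [Fintype V] (G : SimpleGraph V) (k : ℕ) : ℕ :=
  sInf {w | ∃ f : V → ℕ, IsKDomFun G k f ∧ w = ∑ v, f v}

/-- `f` is a weak {k}-dominating function on `G`. -/
noncomputable def IsWeakKDomFun {V : Type*} [Fintype V] (G : SimpleGraph V) (k : ℕ) (f : V → ℕ) : Prop :=
  (∀ v, f v ≤ k) ∧ ∀ v, f v = 0 → k ≤ ∑ u ∈ closedNbr G v, f u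

/-- The weak {k}-domination number γ_{w{k}}(G). -/
noncomputable def weakKDomNum (V : Type*) [Fintype V] (G : SimpleGraph V) (k : ℕ) : ℕ :=
  sInf {w | ∃ f : V → ℕ, IsWeakKDomFun G k f ∧ w = ∑ v, f v}

/-- `G` is claw-free: no induced K_{1,3}. -/
def ClawFree {V : Type*} (G : SimpleGraph V) : Prop :=
  ¬ ∃ v a b c : V, a ≠ b ∧ a ≠ c ∧ b ≠ c ∧
    G.Adj v a ∧ G.Adj v b ∧ G.Adj v c ∧ ¬ G.Adj a b ∧ ¬ G.Adj a c ∧ ¬ G.Adj b c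

/-!
Among the minimum dominating sets of a claw-free graph choose one, `S`, spanning as few edges
as possible; it is independent. If `u, v ∈ S` were adjacent, either every neighbour of `u`
outside `S` is dominated by another vertex of `S`, and then `S \ {u}` is a smaller dominating
set, or `u` has a private neighbour `w`, and then `(S \ {u}) ∪ {w}` is a minimum dominating set
spanning fewer edges. It dominates because a vertex `x` dominated only by `u` is adjacent to `w`:
otherwise `u` would be the centre of a claw with leaves `v`, `w`, `x`.
-/

section

variable {V : Type*} {G : SimpleGraph V}

theorem ClawFree.adj_of_not_adj (hG : ClawFree G) {c a b d : V} (hab : a ≠ b) (had : a ≠ d)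
    (hbd : b ≠ d) (hca : G.Adj c a) (hcb : G.Adj c b) (hcd : G.Adj c d) (hnab : ¬ G.Adj a b)
    (hnad : ¬ G.Adj a d) : G.Adj b d := by
  by_contra hnbd
  exact hG ⟨c, a, b, d, hab, had, hbd, hca, hcb, hcd, hnab, hnad, hnbd⟩

theorem IsDomSet.erase_of_forall_adj {S : Finset V} (hS : IsDomSet G S) {u v : V} (hv : v ∈ S)
    (huv : G.Adj u v) (hu : ∀ x ∉ S, G.Adj u x → ∃ y ∈ S, y ≠ u ∧ G.Adj y x) :
    IsDomSet G (S.erase u) := by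
  intro x hx
  rcases eq_or_ne x u with rfl | hxu
  · exact ⟨v, mem_erase.2 ⟨huv.ne.symm, hv⟩, huv.symm⟩
  have hxS : x ∉ S := fun h => hx (mem_erase.2 ⟨hxu, h⟩)
  obtain ⟨y, hyS, hyx⟩ := hS x hxS
  rcases eq_or_ne y u with rfl | hyu
  · obtain ⟨z, hzS, hzy, hzx⟩ := hu x hxS hyx
    exact ⟨z, mem_erase.2 ⟨hzy, hzS⟩, hzx⟩
  · exact ⟨y, mem_erase.2 ⟨hyu, hyS⟩, hyx⟩

theorem IsDomSet.insert_erase_of_clawFree (hG : ClawFree G) {S : Finset V} (hS : IsDomSet G S)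
    {u v w : V} (hv : v ∈ S) (huv : G.Adj u v) (hw : w ∉ S) (huw : G.Adj u w)
    (hw_priv : ∀ y ∈ S, y ≠ u → ¬ G.Adj y w) : IsDomSet G (insert w (S.erase u)) := by
  intro x hx
  rcases eq_or_ne x u with rfl | hxu
  · exact ⟨v, mem_insert_of_mem (mem_erase.2 ⟨huv.ne.symm, hv⟩), huv.symm⟩
  have hxS : x ∉ S := fun h => hx (mem_insert_of_mem (mem_erase.2 ⟨hxu, h⟩))
  have hxw : x ≠ w := by rintro rfl; exact hx (mem_insert_self x _)
  by_cases hy : ∃ y ∈ S, y ≠ u ∧ G.Adj y x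
  · obtain ⟨y, hyS, hyu, hyx⟩ := hy
    exact ⟨y, mem_insert_of_mem (mem_erase.2 ⟨hyu, hyS⟩), hyx⟩
  push Not at hy
  have hux : G.Adj u x := by
    obtain ⟨y, hyS, hyx⟩ := hS x hxS
    rcases eq_or_ne y u with rfl | hyu
    · exact hyx
    · exact absurd hyx (hy y hyS hyu)
  have hvu : v ≠ u := huv.ne.symm
  exact ⟨w, mem_insert_self w _,
    hG.adj_of_not_adj (fun h => hw (h ▸ hv)) (fun h => hxS (h ▸ hv)) hxw.symm
      huv huw hux (hw_priv v hv hvu) (hy v hv hvu)⟩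

noncomputable def adjPairsIn (G : SimpleGraph V) (S : Finset V) : Finset (V × V) :=
  (S ×ˢ S).filter fun p => G.Adj p.1 p.2

theorem adjPairsIn_mono {S T : Finset V} (h : S ⊆ T) : adjPairsIn G S ⊆ adjPairsIn G T :=
  filter_subset_filter _ (product_subset_product h h)

theorem adjPairsIn_insert_subset {S : Finset V} {w : V} (hw : ∀ x ∈ S, ¬ G.Adj w x) :
    adjPairsIn G (insert w S) ⊆ adjPairsIn G S := by
  rintro ⟨a, b⟩ hab
  simp only [adjPairsIn, mem_filter, mem_product, mem_insert] at hab ⊢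
  obtain ⟨⟨rfl | ha, rfl | hb⟩, hadj⟩ := hab
  · exact absurd hadj G.irrefl
  · exact absurd hadj (hw b hb)
  · exact absurd hadj.symm (hw a ha)
  · exact ⟨⟨ha, hb⟩, hadj⟩

theorem adjPairsIn_erase_ssubset {S : Finset V} {u v : V} (hu : u ∈ S) (hv : v ∈ S)
    (huv : G.Adj u v) : adjPairsIn G (S.erase u) ⊂ adjPairsIn G S :=
  (ssubset_iff_of_subset (adjPairsIn_mono (erase_subset u S))).2
    ⟨(u, v), mem_filter.2 ⟨mem_product.2 ⟨hu, hv⟩, huv⟩,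
      fun h => notMem_erase u S (mem_product.1 (mem_filter.1 h).1).1⟩

variable [Fintype V]

theorem domNum_le {S : Finset V} (hS : IsDomSet G S) : domNum V G ≤ S.card :=
  Nat.sInf_le ⟨S, hS, rfl⟩

theorem indepDomNum_le {S : Finset V} (hS : IsIndepDomSet G S) : indepDomNum V G ≤ S.card :=
  Nat.sInf_le ⟨S, hS, rfl⟩

theorem exists_isDomSet_card_eq_domNum (G : SimpleGraph V) :
    ∃ S : Finset V, IsDomSet G S ∧ S.card = domNum V G :=
  Nat.sInf_mem (s := {n | ∃ S : Finset V, IsDomSet G S ∧ S.card = n})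
    ⟨_, univ, fun v hv => absurd (mem_univ v) hv, rfl⟩

theorem exists_isIndepDomSet (G : SimpleGraph V) : ∃ S : Finset V, IsIndepDomSet G S := by
  set indep : Finset (Finset V) := univ.filter fun S => ∀ u ∈ S, ∀ v ∈ S, ¬ G.Adj u v
  obtain ⟨S, hS, hmax⟩ := exists_maximal (s := indep) ⟨∅, by simp [indep]⟩
  have hind : ∀ u ∈ S, ∀ v ∈ S, ¬ G.Adj u v := (mem_filter.1 hS).2
  refine ⟨S, fun v hv => ?_, hind⟩
  by_contra! hnadj
  have hins : insert v S ∈ indep := by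
    refine mem_filter.2 ⟨mem_univ _, ?_⟩
    simp only [mem_insert]
    rintro a (rfl | ha) b (rfl | hb)
    · exact G.irrefl
    · exact fun h => hnadj b hb h.symm
    · exact hnadj a ha
    · exact hind a ha b hb
  exact hv (hmax hins (subset_insert v S) (mem_insert_self v S))

theorem domNum_le_indepDomNum (G : SimpleGraph V) : domNum V G ≤ indepDomNum V G := by
  obtain ⟨S, hS⟩ := exists_isIndepDomSet G
  obtain ⟨T, hT, hcard⟩ : ∃ T : Finset V, IsIndepDomSet G T ∧ T.card = indepDomNum V G :=
    Nat.sInf_mem (s := {n | ∃ S : Finset V, IsIndepDomSet G S ∧ S.card = n}) ⟨_, S, hS, rfl⟩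
  exact hcard ▸ domNum_le hT.1

theorem ClawFree.exists_isIndepDomSet_card_eq_domNum (hG : ClawFree G) :
    ∃ S : Finset V, IsIndepDomSet G S ∧ S.card = domNum V G := by
  obtain ⟨S₀, hS₀⟩ := exists_isDomSet_card_eq_domNum G
  obtain ⟨S, hS, hmin⟩ := exists_min_image
    (univ.filter fun S : Finset V => IsDomSet G S ∧ S.card = domNum V G)
    (fun S => (adjPairsIn G S).card) ⟨S₀, mem_filter.2 ⟨mem_univ _, hS₀⟩⟩
  obtain ⟨-, hSdom, hScard⟩ := mem_filter.1 hS
  refine ⟨S, ⟨hSdom, fun u hu v hv huv => ?_⟩, hScard⟩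
  by_cases hpriv : ∃ w ∉ S, G.Adj u w ∧ ∀ y ∈ S, y ≠ u → ¬ G.Adj y w
  · obtain ⟨w, hw, huw, hw_priv⟩ := hpriv
    have hDdom : IsDomSet G (insert w (S.erase u)) :=
      hSdom.insert_erase_of_clawFree hG hv huv hw huw hw_priv
    have hDcard : (insert w (S.erase u)).card = domNum V G := by
      rw [card_insert_of_notMem (fun h => hw (mem_of_mem_erase h)), card_erase_add_one hu, hScard]
    have hDpairs : adjPairsIn G (insert w (S.erase u)) ⊂ adjPairsIn G S :=
      (adjPairsIn_insert_subset fun x hx hwx =>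
        hw_priv x (mem_of_mem_erase hx) (ne_of_mem_erase hx) hwx.symm).trans_ssubset
        (adjPairsIn_erase_ssubset hu hv huv)
    exact (hmin _ (mem_filter.2 ⟨mem_univ _, hDdom, hDcard⟩)).not_gt (card_lt_card hDpairs)
  · push Not at hpriv
    have hle := domNum_le (hSdom.erase_of_forall_adj hv huv hpriv)
    rw [card_erase_of_mem hu] at hle
    have := card_pos.2 ⟨u, hu⟩
    omega

end

theorem stmt0 {V : Type*} [Fintype V] (G : SimpleGraph V) (hG : ClawFree G) :
    domNum V G = indepDomNum V G := by
  obtain ⟨S, hS, hcard⟩ := hG.exists_isIndepDomSet_card_eq_domNum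
  exact le_antisymm (domNum_le_indepDomNum G) (hcard ▸ indepDomNum_le hS)
end

section
/- For the cycle C_n on n ≥ 3 vertices, which is claw-free, and any finite simple graph H, γ_{{2}}(C_n □ H) ≥ ⌈n/3⌉ · γ(H). -/
open SimpleGraph Finset
open scoped Classical

/-!
Cut the cycle into `⌈n/3⌉` arcs of at least two consecutive vertices. Fix a {2}-dominating
function `f` on `C_n □ H` and an arc `X`; let `S ⊆ V(H)` be the set of `h` such that `f` does not
vanish on `X × {h}`, and `B` the set of vertices of `H` not dominated by `S`. Then `S ∪ B`
dominates `H`, so `γ(H) ≤ |S| + |B|`. For `h ∈ B` and `a` the first vertex of `X`, the closed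
neighbourhood of `(a, h)` carries no weight except at `(a - 1, h)`, so `2 ≤ f (a - 1, h)`; as
`a - 1` is the last vertex of the previous arc `X'`, this gives `|S'| + |B| ≤ f(X' × V(H))`.
Summing over the arcs, cyclically shifted, yields `⌈n/3⌉ γ(H) ≤ w(f)`.
-/

section

variable {V W : Type*}

lemma self_mem_closedNbr [Fintype V] (G : SimpleGraph V) (v : V) : v ∈ closedNbr G v := by
  simp [closedNbr]

lemma domNum_le_card [Fintype W] {H : SimpleGraph W} {S : Finset W} (hS : IsDomSet H S) :
    domNum W H ≤ S.card :=
  Nat.sInf_le ⟨S, hS, rfl⟩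

lemma le_kDomNum [Fintype V] {G : SimpleGraph V} {k c : ℕ}
    (h : ∀ f : V → ℕ, (∀ v, k ≤ ∑ u ∈ closedNbr G v, f u) → c ≤ ∑ v, f v) :
    c ≤ kDomNum V G k := by
  refine le_csInf ⟨_, fun _ => k, ⟨fun _ => le_rfl, fun v => ?_⟩, rfl⟩ ?_
  · exact single_le_sum (f := fun _ => k) (fun _ _ => Nat.zero_le _) (self_mem_closedNbr G v)
  · rintro _ ⟨f, ⟨-, hf⟩, rfl⟩
    exact h f hf

noncomputable def undominated [Fintype W] (H : SimpleGraph W) (S : Finset W) : Finset W :=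
  univ.filter fun h => h ∉ S ∧ ∀ u, H.Adj u h → u ∉ S

lemma isDomSet_union_undominated [Fintype W] (H : SimpleGraph W) (S : Finset W) :
    IsDomSet H (S ∪ undominated H S) := by
  intro v hv
  simp only [undominated, mem_union, mem_filter, mem_univ, true_and, not_or, not_and,
    not_forall, not_not] at hv
  obtain ⟨u, hu, huS⟩ := hv.2 hv.1
  exact ⟨u, mem_union_left _ huS, hu⟩

lemma domNum_le_card_add_card_undominated [Fintype W] (H : SimpleGraph W) (S : Finset W) :
    domNum W H ≤ S.card + (undominated H S).card :=
  (domNum_le_card (isDomSet_union_undominated H S)).trans (card_union_le _ _)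

noncomputable def projSupport [Fintype W] (f : V × W → ℕ) (X : Finset V) : Finset W :=
  univ.filter fun h => ∃ x ∈ X, f (x, h) ≠ 0

lemma two_le_of_mem_undominated [Fintype V] [Fintype W] {G : SimpleGraph V}
    {H : SimpleGraph W} {f : V × W → ℕ} (hf : ∀ v, 2 ≤ ∑ u ∈ closedNbr (G □ H) v, f u)
    {X : Finset V} {a p : V} (ha : a ∈ X) (hnbr : ∀ u, G.Adj u a → u ∈ X ∨ u = p) {h : W}
    (hh : h ∈ undominated H (projSupport f X)) :
    2 ≤ f (p, h) := by
  simp only [undominated, projSupport, mem_filter, mem_univ, true_and, not_exists, not_and,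
    not_not] at hh
  obtain ⟨hhS, hhN⟩ := hh
  have hsupp : ∀ u ∈ closedNbr (G □ H) (a, h), f u ≠ 0 → u ∈ ({(p, h)} : Finset (V × W)) := by
    rintro ⟨x, y⟩ hu hfu
    simp only [closedNbr, mem_filter, mem_univ, true_and, boxProd_adj, Prod.mk.injEq] at hu
    rw [mem_singleton, Prod.mk.injEq]
    rcases hu with ⟨rfl, rfl⟩ | ⟨hxa, rfl⟩ | ⟨hyh, rfl⟩
    · exact absurd (hhS x ha) hfu
    · rcases hnbr x hxa with hx | rfl
      · exact absurd (hhS x hx) hfu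
      · exact ⟨rfl, rfl⟩
    · exact absurd (hhN y hyh x ha) hfu
  simpa using (hf (a, h)).trans (sum_le_sum_of_ne_zero hsupp)

lemma card_projSupport_add_card_le [Fintype W] {f : V × W → ℕ} {X : Finset V} {p : V}
    (hp : p ∈ X) {T : Finset W} (hT : ∀ h ∈ T, 2 ≤ f (p, h)) :
    (projSupport f X).card + T.card ≤ ∑ x ∈ X, ∑ h, f (x, h) := by
  rw [sum_comm, card_eq_sum_ite (subset_univ (projSupport f X)), card_eq_sum_ite (subset_univ T),
    ← sum_add_distrib]
  refine sum_le_sum fun h _ => ?_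
  have hle : ∀ x ∈ X, f (x, h) ≤ ∑ x ∈ X, f (x, h) := fun x hx =>
    single_le_sum (f := fun x => f (x, h)) (fun _ _ => Nat.zero_le _) hx
  by_cases hhT : h ∈ T
  · have := hle p hp
    have := hT h hhT
    split_ifs <;> omega
  · rw [if_neg hhT, add_zero]
    split_ifs with hhS
    · simp only [projSupport, mem_filter, mem_univ, true_and] at hhS
      obtain ⟨x, hx, hfx⟩ := hhS
      exact (Nat.one_le_iff_ne_zero.mpr hfx).trans (hle x hx)
    · exact Nat.zero_le _

/-- The arcs of the cycle, abstracted: for the cycle, `anchor i` is the first vertex of block `i`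
and `outlet i` the last vertex of the preceding block. -/
structure AnchoredPartition (G : SimpleGraph V) (ι : Type*) where
  block : V → ι
  anchor : ι → V
  outlet : ι → V
  block_anchor : ∀ i, block (anchor i) = i
  adj_anchor : ∀ i u, G.Adj u (anchor i) → block u = i ∨ u = outlet i
  bijective_block_outlet : Function.Bijective (block ∘ outlet)

namespace AnchoredPartition

variable {G : SimpleGraph V} {ι : Type*}

noncomputable def blockSet [Fintype V] (P : AnchoredPartition G ι) (i : ι) : Finset V :=
  univ.filter fun v => P.block v = i

lemma card_mul_domNum_le_sum [Fintype V] [Fintype W] [Fintype ι] (P : AnchoredPartition G ι)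
    (H : SimpleGraph W) {f : V × W → ℕ} (hf : ∀ v, 2 ≤ ∑ u ∈ closedNbr (G □ H) v, f u) :
    Fintype.card ι * domNum W H ≤ ∑ v, f v := by
  let σ := Equiv.ofBijective _ P.bijective_block_outlet
  let S : ι → Finset W := fun i => projSupport f (P.blockSet i)
  let weight : ι → ℕ := fun i => ∑ x ∈ P.blockSet i, ∑ h, f (x, h)
  have hblock : ∀ i, (S (σ i)).card + (undominated H (S i)).card ≤ weight (σ i) := fun i =>
    card_projSupport_add_card_le (p := P.outlet i) (by simp [blockSet, σ]) fun h hh =>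
      two_le_of_mem_undominated hf (a := P.anchor i) (by simp [blockSet, P.block_anchor])
        (fun u hu => by simpa [blockSet] using P.adj_anchor i u hu) hh
  calc Fintype.card ι * domNum W H = ∑ i, domNum W H := by simp
    _ ≤ ∑ i, ((S i).card + (undominated H (S i)).card) :=
        sum_le_sum fun i _ => domNum_le_card_add_card_undominated H (S i)
    _ = ∑ i, ((S (σ i)).card + (undominated H (S i)).card) := by
        rw [sum_add_distrib, sum_add_distrib, σ.sum_comp (fun i => (S i).card)]
    _ ≤ ∑ i, weight (σ i) := sum_le_sum fun i _ => hblock i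
    _ = ∑ v, f v := by
        rw [σ.sum_comp weight, Fintype.sum_prod_type]
        exact sum_fiberwise univ P.block fun x => ∑ h, f (x, h)

lemma card_mul_domNum_le_kDomNum [Fintype V] [Fintype W] [Fintype ι]
    (P : AnchoredPartition G ι) (H : SimpleGraph W) :
    Fintype.card ι * domNum W H ≤ kDomNum (V × W) (G □ H) 2 :=
  le_kDomNum fun _ hf => P.card_mul_domNum_le_sum H hf

end AnchoredPartition

lemma Fin.val_eq_add_one_of_sub_val_eq_one {n : ℕ} {a b : Fin n} (h : (a - b).val = 1) :
    a.val = b.val + 1 ∨ a.val + n = b.val + 1 := by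
  have ha := a.isLt
  have hb := b.isLt
  rw [Fin.val_sub] at h
  rcases Nat.lt_or_ge (n - b + a) n with hlt | hge
  · rw [Nat.mod_eq_of_lt hlt] at h
    omega
  · rw [Nat.mod_eq_sub_mod hge, Nat.mod_eq_of_lt (by omega)] at h
    omega

lemma SimpleGraph.cycleGraph_adj_val {n : ℕ} {u v : Fin n} (h : (cycleGraph n).Adj u v) :
    u.val = v.val + 1 ∨ v.val = u.val + 1 ∨ u.val + n = v.val + 1 ∨ v.val + n = u.val + 1 := by
  rcases cycleGraph_adj'.mp h with h | h
  · rcases Fin.val_eq_add_one_of_sub_val_eq_one h with h | h <;> omega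
  · rcases Fin.val_eq_add_one_of_sub_val_eq_one h with h | h <;> omega

/-- Block `i < m - 1` is the arc `{2i, 2i + 1}` and the last block is `{2(m - 1), …, n - 1}`,
where `m = ⌈n/3⌉`; every block has at least two vertices, anchored at its first one. -/
def cycleGraphAnchoredPartition (n : ℕ) :
    AnchoredPartition (cycleGraph n) (Fin ((n + 2) / 3)) where
  block x := ⟨min (x.val / 2) ((n + 2) / 3 - 1), by have := x.isLt; omega⟩
  anchor i := ⟨2 * i.val, by have := i.isLt; omega⟩
  outlet i := ⟨if i.val = 0 then n - 1 else 2 * i.val - 1, by have := i.isLt; split <;> omega⟩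
  block_anchor i := by ext; simp only; have := i.isLt; omega
  adj_anchor i u hu := by
    have := i.isLt
    have := u.isLt
    have h := cycleGraph_adj_val hu
    simp only [Fin.ext_iff] at h ⊢
    rcases h with h | h | h | h <;> split <;> omega
  bijective_block_outlet := by
    rw [← Finite.injective_iff_bijective]
    intro i j hij
    have := i.isLt
    have := j.isLt
    simp only [Function.comp_apply, Fin.ext_iff] at hij ⊢
    split at hij <;> split at hij <;> omega

end

theorem stmt16_general {W : Type*} [Fintype W] (n : ℕ) (H : SimpleGraph W) :
    (n + 2) / 3 * domNum W H ≤ kDomNum (Fin n × W) (SimpleGraph.cycleGraph n □ H) 2 := by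
  simpa using (cycleGraphAnchoredPartition n).card_mul_domNum_le_kDomNum H

theorem stmt16 {W : Type*} [Fintype W] (n : ℕ) (hn : 3 ≤ n) (H : SimpleGraph W) :
    (n + 2) / 3 * domNum W H ≤ kDomNum (Fin n × W) (SimpleGraph.cycleGraph n □ H) 2 :=
  stmt16_general n H
end

section
/- If G is a claw-free graph with a perfect independent dominating set S (every vertex not in S has exactly one neighbor in S), and H is any graph, then for a minimum weak {2}-dominating multiset D of G □ H, each vertex (v,h) of D satisfies that v lies in the closed neighborhood of exactly one vertex of S, and hence the projections of D partitioned by the vertices of S each dominate H, giving γ_{w{2}}(G □ H) ≥ |S|·γ(H). -/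
open SimpleGraph Finset
open scoped Classical

theorem existsUnique_closedNbr_of_perfect {V : Type*} {G : SimpleGraph V} {S : Finset V}
    (hindep : ∀ u ∈ S, ∀ v ∈ S, ¬ G.Adj u v)
    (hperf : ∀ v, v ∉ S → (S.filter (fun u => G.Adj u v)).card = 1) (v : V) :
    ∃! s, s ∈ S ∧ (v = s ∨ G.Adj s v) := by
  by_cases hv : v ∈ S
  · refine ⟨v, ⟨hv, Or.inl rfl⟩, ?_⟩
    rintro s ⟨hs, rfl | hadj⟩
    · rfl
    · exact absurd hadj (hindep s hs v hv)
  · obtain ⟨s, hs⟩ := Finset.card_eq_one.mp (hperf v hv)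
    have hmem : ∀ t, t ∈ S ∧ G.Adj t v ↔ t = s := fun t => by
      rw [← Finset.mem_singleton, ← hs, Finset.mem_filter]
    refine ⟨s, ⟨((hmem s).2 rfl).1, Or.inr ((hmem s).2 rfl).2⟩, ?_⟩
    rintro t ⟨ht, rfl | hadj⟩
    · exact absurd ht hv
    · exact (hmem t).1 ⟨ht, hadj⟩

section ClosedNbr

variable {V : Type*} [Fintype V] {G : SimpleGraph V}

theorem mem_closedNbr {u v : V} : u ∈ closedNbr G v ↔ u = v ∨ G.Adj u v := by
  simp [closedNbr]

theorem pairwiseDisjoint_closedNbr {S : Finset V}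
    (huniq : ∀ v, ∃! s, s ∈ S ∧ (v = s ∨ G.Adj s v)) :
    (S : Set V).PairwiseDisjoint (closedNbr G) := by
  intro s hs t ht hst
  refine Finset.disjoint_left.mpr fun v hvs hvt => hst ?_
  rw [mem_closedNbr, adj_comm] at hvs hvt
  exact (huniq v).unique ⟨hs, hvs⟩ ⟨ht, hvt⟩

end ClosedNbr

theorem card_filter_ne_zero_le_sum {ι : Type*} (s : Finset ι) (g : ι → ℕ) :
    (s.filter (fun i => g i ≠ 0)).card ≤ ∑ i ∈ s, g i :=
  calc (s.filter (fun i => g i ≠ 0)).card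
      ≤ ∑ i ∈ s.filter (fun i => g i ≠ 0), g i := by
        simpa using Finset.card_nsmul_le_sum _ g 1 fun i hi =>
          Nat.one_le_iff_ne_zero.mpr (Finset.mem_filter.mp hi).2
    _ ≤ ∑ i ∈ s, g i := Finset.sum_le_sum_of_subset (Finset.filter_subset _ _)

theorem domNum_le_card_s18 {V : Type*} [Fintype V] {G : SimpleGraph V} {D : Finset V}
    (hD : IsDomSet G D) : domNum V G ≤ D.card :=
  Nat.sInf_le ⟨D, hD, rfl⟩

theorem le_weakKDomNum {V : Type*} [Fintype V] {G : SimpleGraph V} {k n : ℕ}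
    (h : ∀ f, IsWeakKDomFun G k f → n ≤ ∑ v, f v) : n ≤ weakKDomNum V G k := by
  have hne : {w | ∃ f : V → ℕ, IsWeakKDomFun G k f ∧ w = ∑ v, f v}.Nonempty :=
    ⟨_, fun _ => k, ⟨fun _ => le_rfl, fun v hv => by simp [hv]⟩, rfl⟩
  exact le_csInf hne fun _ ⟨f, hf, hw⟩ => hw ▸ h f hf

section BoxProd

variable {V W : Type*} [Fintype V] [Fintype W] {G : SimpleGraph V} {H : SimpleGraph W}

/-- The projection onto `H` of the support of `f` restricted to `N[s] × W`. -/
noncomputable def nbrProj (G : SimpleGraph V) (f : V × W → ℕ) (s : V) : Finset W :=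
  Finset.univ.filter fun h => ∑ v ∈ closedNbr G s, f (v, h) ≠ 0

theorem isDomSet_nbrProj {k : ℕ} (hk : 0 < k) {f : V × W → ℕ}
    (hf : IsWeakKDomFun (G □ H) k f) (s : V) : IsDomSet H (nbrProj G f s) := by
  intro h hh
  have hzero : ∀ v ∈ closedNbr G s, f (v, h) = 0 := by
    simpa [nbrProj, Finset.sum_eq_zero_iff] using hh
  have hsh : f (s, h) = 0 := hzero s (mem_closedNbr.mpr (Or.inl rfl))
  have hsum : ∑ u ∈ closedNbr (G □ H) (s, h), f u ≠ 0 := by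
    have := hf.2 _ hsh
    omega
  obtain ⟨⟨a, b⟩, hab, hfab⟩ := Finset.exists_ne_zero_of_sum_ne_zero hsum
  rcases mem_closedNbr.mp hab with heq | hadj
  · exact absurd (heq ▸ hsh) hfab
  -- a neighbour of `(s, h)` outside `N[s] × {h}` lies in `{s} × N(h)`
  rcases boxProd_adj.mp hadj with ⟨hGa, rfl⟩ | ⟨hHb, rfl⟩
  · exact absurd (hzero a (mem_closedNbr.mpr (Or.inr hGa))) hfab
  · refine ⟨b, Finset.mem_filter.mpr ⟨Finset.mem_univ _, ?_⟩, hHb⟩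
    exact fun h0 => hfab (Finset.sum_eq_zero_iff.mp h0 a (mem_closedNbr.mpr (Or.inl rfl)))

/-- Each `s ∈ S` forces a dominating set of `H` into the layers over `N[s]`; disjointness of
these closed neighbourhoods keeps the contributions apart. -/
theorem card_mul_domNum_le_sum {S : Finset V} (hS : (S : Set V).PairwiseDisjoint (closedNbr G))
    {k : ℕ} (hk : 0 < k) {f : V × W → ℕ} (hf : IsWeakKDomFun (G □ H) k f) :
    S.card * domNum W H ≤ ∑ p, f p :=
  calc S.card * domNum W H = ∑ _s ∈ S, domNum W H := by rw [Finset.sum_const, smul_eq_mul]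
    _ ≤ ∑ s ∈ S, (nbrProj G f s).card :=
        Finset.sum_le_sum fun s _ => domNum_le_card_s18 (isDomSet_nbrProj hk hf s)
    _ ≤ ∑ s ∈ S, ∑ h, ∑ v ∈ closedNbr G s, f (v, h) :=
        Finset.sum_le_sum fun s _ => card_filter_ne_zero_le_sum _ _
    _ = ∑ h, ∑ v ∈ S.biUnion (closedNbr G), f (v, h) := by
        rw [Finset.sum_comm]
        exact Finset.sum_congr rfl fun h _ => (Finset.sum_biUnion hS).symm
    _ ≤ ∑ h, ∑ v, f (v, h) :=
        Finset.sum_le_sum fun h _ => Finset.sum_le_sum_of_subset (Finset.subset_univ _)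
    _ = ∑ p, f p := by rw [Finset.sum_comm, Fintype.sum_prod_type]

end BoxProd

theorem stmt18_general {V W : Type*} [Fintype V] [Fintype W]
    (G : SimpleGraph V) (H : SimpleGraph W) (S : Finset V)
    (hSdom : IsIndepDomSet G S)
    (hperf : ∀ v, v ∉ S → (S.filter (fun u => G.Adj u v)).card = 1) :
    (∀ v : V, ∃! s, s ∈ S ∧ (v = s ∨ G.Adj s v)) ∧
      S.card * domNum W H ≤ weakKDomNum (V × W) (G □ H) 2 := by
  have huniq := existsUnique_closedNbr_of_perfect hSdom.2 hperf
  exact ⟨huniq, le_weakKDomNum fun f hf =>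
    card_mul_domNum_le_sum (pairwiseDisjoint_closedNbr huniq) two_pos hf⟩

theorem stmt18 {V W : Type*} [Fintype V] [Fintype W]
    (G : SimpleGraph V) (H : SimpleGraph W) (hG : ClawFree G) (S : Finset V)
    (hSdom : IsIndepDomSet G S)
    (hperf : ∀ v, v ∉ S → (S.filter (fun u => G.Adj u v)).card = 1) :
    (∀ v : V, ∃! s, s ∈ S ∧ (v = s ∨ G.Adj s v)) ∧
      S.card * domNum W H ≤ weakKDomNum (V × W) (G □ H) 2 :=
  stmt18_general G H S hSdom hperf
end
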